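/- arXiv:2404.00602 — 4 statements merged into one kernel-verified Lean document; each statement's English description precedes it below -/
import Mathlib

section
/- Merkle collision extraction (Ext₁): for any function H : {0,1}* → {0,1}^λ, if tree is the Merkle tree built from M = (m_0,…,m_{2^k−1}) with root value root, and m'_i ≠ m_i is a message with a path path' of length k such that RootReconstruct^H(path', m'_i, i) = root, then H is not injective: there exist x ≠ x' with H(x) = H(x'). -/
/-- Root of the complete binary Merkle hash tree over the `2^k` messages
`M 0, …, M (2^k − 1)`: leaf `i` carries `H (M i)` and each internal node carries
the hash of the concatenation of its two children's values. -/
def merkleRoot (H : List Bool → List Bool) : ℕ → (ℕ → List Bool) → List Bool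
  | 0, M => H (M 0)
  | k + 1, M => H (merkleRoot H k M ++ merkleRoot H k (fun j => M (2 ^ k + j)))

/-- Authentication path for leaf index `i`: the list of sibling hash values along the
root-to-leaf path, from the top level down to the leaf level. -/
def merklePath (H : List Bool → List Bool) : ℕ → (ℕ → List Bool) → ℕ → List (List Bool)
  | 0, _, _ => []
  | k + 1, M, i =>
    if i < 2 ^ k then
      merkleRoot H k (fun j => M (2 ^ k + j)) :: merklePath H k M i
    else
      merkleRoot H k M :: merklePath H k (fun j => M (2 ^ k + j)) (i - 2 ^ k)

/-- `bitsOf k i` is the `k`-bit big-endian binary expansion `(b₁,…,b_k)` of `i`. -/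
def bitsOf : ℕ → ℕ → List Bool
  | 0, _ => []
  | k + 1, i => decide (2 ^ k ≤ i) :: bitsOf k (i % 2 ^ k)

/-- `rootReconstruct H bits path v` recomputes the root value from a claimed leaf
value `v`, the root-to-leaf direction bits, and the sibling path, by iterated
hashing: at each level the current value is concatenated with the sibling on the
side indicated by the direction bit. -/
def rootReconstruct (H : List Bool → List Bool) :
    List Bool → List (List Bool) → List Bool → List Bool
  | [], _, v => v
  | _ :: _, [], v => v
  | b :: bs, s :: ss, v =>
    let child := rootReconstruct H bs ss v
    H (if b then s ++ child else child ++ s)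

/-!
If `H` were injective, the reconstruction could be unwound level by level: equal hashes mean
equal concatenations, and since the reconstructed child and the true child both have length `λ`,
the concatenations split into equal children. Descending to the leaf gives `H m' = H mᵢ`, so
`m' = mᵢ`.
-/

section Merkle

variable {lam : ℕ} {H : List Bool → List Bool}

theorem length_merkleRoot (hH : ∀ x, (H x).length = lam) (k : ℕ) (M : ℕ → List Bool) :
    (merkleRoot H k M).length = lam := by
  cases k <;> simp only [merkleRoot, hH]

theorem length_rootReconstruct (hH : ∀ x, (H x).length = lam) (bits : List Bool)
    (path : List (List Bool)) {v : List Bool} (hv : v.length = lam) :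
    (rootReconstruct H bits path v).length = lam := by
  cases bits <;> cases path <;> simp only [rootReconstruct, hH, hv]

theorem bitsOf_succ_of_lt {k i : ℕ} (hi : i < 2 ^ k) :
    bitsOf (k + 1) i = false :: bitsOf k i := by
  simp [bitsOf, Nat.mod_eq_of_lt hi, hi]

theorem bitsOf_succ_of_le {k i : ℕ} (hki : 2 ^ k ≤ i) (hi : i < 2 ^ (k + 1)) :
    bitsOf (k + 1) i = true :: bitsOf k (i - 2 ^ k) := by
  have hmod : i % 2 ^ k = i - 2 ^ k := by
    rw [Nat.mod_eq_sub_mod hki, Nat.mod_eq_of_lt (by rw [pow_succ] at hi; omega)]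
  simp [bitsOf, hmod, hki]

theorem eq_leaf_of_rootReconstruct_eq_merkleRoot (hH : ∀ x, (H x).length = lam)
    (hinj : Function.Injective H) {k : ℕ} {M : ℕ → List Bool} {i : ℕ} (hi : i < 2 ^ k)
    {path : List (List Bool)} (hlen : path.length = k) {v : List Bool} (hv : v.length = lam)
    (hroot : rootReconstruct H (bitsOf k i) path v = merkleRoot H k M) :
    v = H (M i) := by
  induction k generalizing M i path with
  | zero =>
    obtain rfl : i = 0 := by simpa using hi
    simpa [bitsOf, rootReconstruct, merkleRoot] using hroot
  | succ k ih =>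
    obtain ⟨s, path, rfl⟩ := List.exists_cons_of_length_eq_add_one hlen
    have hlen : path.length = k := by simpa using hlen
    by_cases hik : i < 2 ^ k
    · rw [bitsOf_succ_of_lt hik] at hroot
      simp only [rootReconstruct, merkleRoot, Bool.false_eq_true, ↓reduceIte] at hroot
      have hchild := (List.append_inj (hinj hroot) (by
        rw [length_rootReconstruct hH _ _ hv, length_merkleRoot hH])).1
      exact ih hik hlen hchild
    · push Not at hik
      rw [bitsOf_succ_of_le hik hi] at hroot
      simp only [rootReconstruct, merkleRoot, ↓reduceIte] at hroot
      have hchild := (List.append_inj' (hinj hroot) (by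
        rw [length_rootReconstruct hH _ _ hv, length_merkleRoot hH])).2
      have hi' : i - 2 ^ k < 2 ^ k := by rw [pow_succ] at hi; omega
      simpa [Nat.add_sub_cancel' hik] using ih (M := fun j => M (2 ^ k + j)) hi' hlen hchild

end Merkle

theorem stmt_5_general (lam : ℕ) (H : List Bool → List Bool)
    (hH : ∀ x, (H x).length = lam)
    (k : ℕ) (M : ℕ → List Bool) (i : ℕ) (hi : i < 2 ^ k)
    (m' : List Bool) (hm' : m' ≠ M i)
    (path' : List (List Bool)) (hlen : path'.length = k)
    (hroot : rootReconstruct H (bitsOf k i) path' (H m') = merkleRoot H k M) :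
    ∃ x x' : List Bool, x ≠ x' ∧ H x = H x' := by
  obtain ⟨x, x', hcoll, hne⟩ := Function.not_injective_iff.mp fun hinj =>
    hm' (hinj (eq_leaf_of_rootReconstruct_eq_merkleRoot hH hinj hi hlen (hH m') hroot))
  exact ⟨x, x', hne, hcoll⟩

/-- Merkle collision extraction (Ext₁): for any `H : {0,1}* → {0,1}^λ`
(all outputs have length `λ`), if the Merkle tree over `M = (m_0,…,m_{2^k−1})` has
root value `root`, and `m' ≠ m_i` is a message with a sibling path `path'` of
length `k` (consisting of `λ`-bit values) such that
`rootReconstruct H (bitsOf k i) path' (H m') = root`, then `H` is not injective: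
there exist `x ≠ x'` with `H x = H x'`. -/
theorem stmt_5 (lam : ℕ) (H : List Bool → List Bool)
    (hH : ∀ x, (H x).length = lam)
    (k : ℕ) (M : ℕ → List Bool) (i : ℕ) (hi : i < 2 ^ k)
    (m' : List Bool) (hm' : m' ≠ M i)
    (path' : List (List Bool)) (hlen : path'.length = k)
    (hpath : ∀ s ∈ path', s.length = lam)
    (hroot : rootReconstruct H (bitsOf k i) path' (H m') = merkleRoot H k M) :
    ∃ x x' : List Bool, x ≠ x' ∧ H x = H x' :=
  stmt_5_general lam H hH k M i hi m' hm' path' hlen hroot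
end

section
/- Merkle path collision extraction (Ext₂): for any function H : {0,1}* → {0,1}^λ, if two distinct sibling paths path ≠ path' of length k for the same message m and the same leaf index j satisfy RootReconstruct^H(path, m, j) = RootReconstruct^H(path', m, j), then there exist x ≠ x' with H(x) = H(x'), i.e., a collision of H. -/
/-! If two reconstructions agree at the root, compare the inputs of the top hash: if they differ
they form a collision; if not, all strings have length `λ`, so the top sibling and the child values
agree, and we descend one level. Since the paths differ, some level yields a collision. -/

theorem length_bitsOf (k j : ℕ) : (bitsOf k j).length = k := by
  induction k generalizing j with
  | zero => rfl
  | succ k ih => simp [bitsOf, ih]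

theorem length_rootReconstruct_eq {lam : ℕ} {H : List Bool → List Bool}
    (hH : ∀ x, (H x).length = lam) (bs : List Bool) {ss ss' : List (List Bool)}
    (hss : ss.length = ss'.length) (v : List Bool) :
    (rootReconstruct H bs ss v).length = (rootReconstruct H bs ss' v).length := by
  match bs, ss, ss' with
  | [], _, _ => rfl
  | _ :: _, [], [] => rfl
  | _ :: _, _ :: _, _ :: _ => simp [rootReconstruct, hH]
  | _ :: _, [], _ :: _ | _ :: _, _ :: _, [] => simp at hss

theorem eq_and_eq_of_ite_append_eq {α : Type*} (b : Bool) {s s' c c' : List α}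
    (hs : s.length = s'.length) (hc : c.length = c'.length)
    (h : (if b then s ++ c else c ++ s) = (if b then s' ++ c' else c' ++ s')) :
    s = s' ∧ c = c' := by
  cases b
  · exact (List.append_inj h hc).symm
  · exact List.append_inj h hs

theorem exists_collision_of_rootReconstruct_eq {lam : ℕ} {H : List Bool → List Bool}
    (hH : ∀ x, (H x).length = lam) (bs : List Bool) {ss ss' : List (List Bool)}
    (hne : ss ≠ ss') (hlen : ss.length = bs.length) (hlen' : ss'.length = bs.length)
    (hp : ∀ s ∈ ss, s.length = lam) (hp' : ∀ s ∈ ss', s.length = lam) (v : List Bool)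
    (heq : rootReconstruct H bs ss v = rootReconstruct H bs ss' v) :
    ∃ x x' : List Bool, x ≠ x' ∧ H x = H x' := by
  induction bs generalizing ss ss' with
  | nil =>
    exact absurd (by rw [List.length_eq_zero_iff.1 hlen, List.length_eq_zero_iff.1 hlen']) hne
  | cons b bs ih =>
    match ss, ss' with
    | [], _ | _, [] => simp at hlen hlen'
    | s :: ss, s' :: ss' =>
      simp only [rootReconstruct] at heq
      set c := rootReconstruct H bs ss v
      set c' := rootReconstruct H bs ss' v
      by_cases hinput : (if b then s ++ c else c ++ s) = (if b then s' ++ c' else c' ++ s')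
      · have hlen_tail : ss.length = ss'.length := by simp_all
        obtain ⟨rfl, hchild⟩ := eq_and_eq_of_ite_append_eq b
          ((hp s (by simp)).trans (hp' s' (by simp)).symm)
          (length_rootReconstruct_eq hH bs hlen_tail v) hinput
        exact ih (fun h => hne (congrArg _ h)) (by simpa using hlen) (by simpa using hlen')
          (fun t ht => hp t (List.mem_cons_of_mem _ ht))
          (fun t ht => hp' t (List.mem_cons_of_mem _ ht)) hchild
      · exact ⟨_, _, hinput, heq⟩

theorem stmt_6_general (lam : ℕ) (H : List Bool → List Bool)
    (hH : ∀ x, (H x).length = lam)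
    (k : ℕ) (j : ℕ) (m : List Bool)
    (path path' : List (List Bool))
    (hne : path ≠ path')
    (hlen : path.length = k) (hlen' : path'.length = k)
    (hp : ∀ s ∈ path, s.length = lam) (hp' : ∀ s ∈ path', s.length = lam)
    (heq : rootReconstruct H (bitsOf k j) path (H m) =
           rootReconstruct H (bitsOf k j) path' (H m)) :
    ∃ x x' : List Bool, x ≠ x' ∧ H x = H x' :=
  exists_collision_of_rootReconstruct_eq hH (bitsOf k j) hne
    (hlen.trans (length_bitsOf k j).symm) (hlen'.trans (length_bitsOf k j).symm) hp hp' (H m) heq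

/-- Merkle path collision extraction (Ext₂): for any `H : {0,1}* → {0,1}^λ`
(all outputs of length `λ`), if two distinct sibling paths `path ≠ path'` of
length `k` (with `λ`-bit entries) for the same message `m` and the same leaf
index `j` reconstruct to the same root value, then there exist `x ≠ x'` with
`H x = H x'`, i.e. a collision of `H`. -/
theorem stmt_6 (lam : ℕ) (H : List Bool → List Bool)
    (hH : ∀ x, (H x).length = lam)
    (k : ℕ) (j : ℕ) (hj : j < 2 ^ k) (m : List Bool)
    (path path' : List (List Bool))
    (hne : path ≠ path')
    (hlen : path.length = k) (hlen' : path'.length = k)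
    (hp : ∀ s ∈ path, s.length = lam) (hp' : ∀ s ∈ path', s.length = lam)
    (heq : rootReconstruct H (bitsOf k j) path (H m) =
           rootReconstruct H (bitsOf k j) path' (H m)) :
    ∃ x x' : List Bool, x ≠ x' ∧ H x = H x' :=
  stmt_6_general lam H hH k j m path path' hne hlen hlen' hp hp' heq
end

section
/- Correctness of the oblivious signature construction OS_Ours: for any hash function H, commitment scheme COM, and correct digital signature scheme DS, and for any message list M = (m_0,…,m_{n−1}) of distinct messages with n = 2^k and any index j, the honestly produced signature σ^OS = (root, c, σ^DS, path, j, r) on m_j verifies, i.e., OS.Verify(vk, m_j, σ^OS) = 1. -/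
theorem rootReconstruct_merklePath (H : List Bool → List Bool) (k : ℕ) (M : ℕ → List Bool)
    {j : ℕ} (hj : j < 2 ^ k) :
    rootReconstruct H (bitsOf k j) (merklePath H k M j) (H (M j)) = merkleRoot H k M := by
  induction k generalizing M j with
  | zero =>
    obtain rfl : j = 0 := by simpa using hj
    rfl
  | succ k ih =>
    by_cases hleft : j < 2 ^ k
    · simp [bitsOf, merklePath, merkleRoot, rootReconstruct, hleft, Nat.not_le.mpr hleft,
        Nat.mod_eq_of_lt hleft, ih M hleft]
    · rw [not_lt] at hleft
      have hoff : j - 2 ^ k < 2 ^ k := by omega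
      have hmod : j % 2 ^ k = j - 2 ^ k := by
        rw [Nat.mod_eq_sub_mod hleft, Nat.mod_eq_of_lt hoff]
      have hright := ih (fun t => M (2 ^ k + t)) hoff
      rw [Nat.add_sub_cancel' hleft] at hright
      simp [bitsOf, merklePath, merkleRoot, rootReconstruct, hleft, Nat.not_lt.mpr hleft, hmod,
        hright]

theorem stmt_8_general {CK R C SK VK Sig : Type}
    (H : List Bool → List Bool)
    (commit : CK → List Bool → R → C)
    (sign : SK → (List Bool × C) → Sig)
    (dsVerify : VK → (List Bool × C) → Sig → Bool)
    (vk : VK) (sk : SK)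
    (hDS : ∀ msg : List Bool × C, dsVerify vk msg (sign sk msg) = true)
    (k : ℕ) (M : ℕ → List Bool)
    (j : ℕ) (hj : j < 2 ^ k) (ck : CK) (r : R) :
    let root := merkleRoot H k M
    let c := commit ck (M j) r
    let σDS := sign sk (root, c)
    let path := merklePath H k M j
    rootReconstruct H (bitsOf k j) path (H (M j)) = root ∧
    commit ck (M j) r = c ∧
    dsVerify vk (root, c) σDS = true := by
  exact ⟨rootReconstruct_merklePath H k M hj, rfl, hDS _⟩

/-- Correctness of the oblivious signature construction OS_Ours: for any hash
function `H`, commitment scheme (given by its `commit` algorithm), and correct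
digital signature scheme `(sign, dsVerify)` for the key pair `(vk, sk)`, and for
any message list `M = (m_0,…,m_{n−1})` of distinct messages with `n = 2^k` and any
index `j < 2^k`, the honestly produced signature
`σ^OS = (root, c, σ^DS, path, j, r)` on `m_j` verifies: all three checks of
`OS.Verify` succeed. -/
theorem stmt_8 {CK R C SK VK Sig : Type}
    (H : List Bool → List Bool)
    (commit : CK → List Bool → R → C)
    (sign : SK → (List Bool × C) → Sig)
    (dsVerify : VK → (List Bool × C) → Sig → Bool)
    (vk : VK) (sk : SK)
    (hDS : ∀ msg : List Bool × C, dsVerify vk msg (sign sk msg) = true)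
    (k : ℕ) (M : ℕ → List Bool)
    (hdist : ∀ t t', t < 2 ^ k → t' < 2 ^ k → t ≠ t' → M t ≠ M t')
    (j : ℕ) (hj : j < 2 ^ k) (ck : CK) (r : R) :
    let root := merkleRoot H k M
    let c := commit ck (M j) r
    let σDS := sign sk (root, c)
    let path := merklePath H k M j
    rootReconstruct H (bitsOf k j) path (H (M j)) = root ∧
    commit ck (M j) r = c ∧
    dsVerify vk (root, c) σDS = true :=
  stmt_8_general H commit sign dsVerify vk sk hDS k M j hj ck r
end

section
/- Communication size asymptotics: in OS_Ours with n = 2^k messages, the total of the second-round message size plus the final signature size is |σ^DS| + (|σ^DS| + |c| + |r| + (k+1)λ + k) bits, which is O(log n) in n, whereas in OS_ZLH it is n·|σ^DS| + (|σ^DS| + |c| + |r|), which is Θ(n). -/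
/-! Both totals are affine: the OS_Ours total in `⌈log₂ n⌉ ≤ log₂ n + 1`, hence `O(log n)`, and
the OS_ZLH total in `n` with slope `|σ^DS| > 0`, hence `Θ(n)`. -/

open Filter Asymptotics

/-- Total of second-round message size plus final signature size in OS_Ours with
`n` messages, where `k = ⌈log₂ n⌉`: the signer sends one DS signature, and the
final signature is `(root, c, σ^DS, path, j, r)` with a Merkle path of `k` hash
values of `λ` bits each plus a `k`-bit index. -/
def oursTotal (sDS c r lam : ℕ) (n : ℕ) : ℕ :=
  sDS + (sDS + c + r + (Nat.clog 2 n + 1) * lam + Nat.clog 2 n)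

/-- Total of second-round message size plus final signature size in OS_ZLH with
`n` messages: the signer sends `n` DS signatures and the final signature is
`(c, r, σ^DS)`. -/
def zlhTotal (sDS c r : ℕ) (n : ℕ) : ℕ :=
  n * sDS + (sDS + c + r)

namespace Nat

theorem clog_le_log_add_one {b : ℕ} (hb : 1 < b) (n : ℕ) : clog b n ≤ log b n + 1 :=
  (clog_le_iff_le_pow hb).2 (lt_pow_succ_log_self hb n).le

end Nat

theorem isBigO_natClog_log {b : ℕ} (hb : 1 < b) :
    (fun n : ℕ => (Nat.clog b n : ℝ)) =O[atTop] fun n : ℕ => Real.log n := by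
  have hlogb : (fun n : ℕ => Real.logb b n + 1) =O[atTop] fun n : ℕ => Real.log n :=
    ((Real.isBigO_logb_log.mono le_top).add Real.isLittleO_const_log_atTop.isBigO).natCast_atTop
  refine IsBigO.trans (IsBigO.of_bound 1 (Eventually.of_forall fun n => ?_)) hlogb
  have hclog : (Nat.clog b n : ℝ) ≤ Real.logb b n + 1 := by
    calc (Nat.clog b n : ℝ) ≤ Nat.log b n + 1 := by exact_mod_cast Nat.clog_le_log_add_one hb n
      _ ≤ Real.logb b n + 1 := by gcongr; exact Real.natLog_le_logb n b
  rw [one_mul, Real.norm_of_nonneg (Nat.cast_nonneg _)]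
  exact hclog.trans (le_abs_self _)

theorem isTheta_affine_natCast {a : ℝ} (ha : a ≠ 0) (b : ℝ) :
    (fun n : ℕ => a * n + b) =Θ[atTop] fun n : ℕ => (n : ℝ) := by
  have hlin : (fun n : ℕ => a * n) =Θ[atTop] fun n : ℕ => (n : ℝ) :=
    (isTheta_const_mul_left ha).2 (isTheta_refl _ _)
  have hconst : (fun _ : ℕ => b) =o[atTop] fun n : ℕ => a * n :=
    (isLittleO_const_id_atTop b).natCast_atTop.trans_isTheta hlin.symm
  exact (IsEquivalent.refl.add_isLittleO hconst).isTheta.trans hlin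

theorem oursTotal_two_pow (sDS c r lam k : ℕ) :
    oursTotal sDS c r lam (2 ^ k) = sDS + (sDS + c + r + (k + 1) * lam + k) := by
  simp [oursTotal, Nat.clog_pow 2 k one_lt_two]

theorem oursTotal_cast (sDS c r lam n : ℕ) :
    (oursTotal sDS c r lam n : ℝ) = (2 * sDS + c + r + lam) + (lam + 1) * Nat.clog 2 n := by
  push_cast [oursTotal]
  ring

theorem zlhTotal_cast (sDS c r n : ℕ) :
    (zlhTotal sDS c r n : ℝ) = sDS * n + (sDS + c + r) := by
  push_cast [zlhTotal]
  ring

theorem stmt_13_general (sDS c r lam : ℕ) (hs : 0 < sDS) :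
    (∀ k : ℕ, 0 < k → oursTotal sDS c r lam (2 ^ k) =
      sDS + (sDS + c + r + (k + 1) * lam + k)) ∧
    ((fun n : ℕ => (oursTotal sDS c r lam n : ℝ)) =O[atTop]
      fun n : ℕ => Real.log n) ∧
    ((fun n : ℕ => (zlhTotal sDS c r n : ℝ)) =Θ[atTop] fun n : ℕ => (n : ℝ)) := by
  refine ⟨fun k _ => oursTotal_two_pow sDS c r lam k, ?_, ?_⟩
  · simp_rw [oursTotal_cast]
    exact Real.isLittleO_const_log_atTop.natCast_atTop.isBigO.add
      ((isBigO_natClog_log one_lt_two).const_mul_left _)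
  · simp_rw [zlhTotal_cast]
    exact isTheta_affine_natCast (by exact_mod_cast hs.ne') _

/-- Communication size asymptotics: in OS_Ours with `n = 2^k` messages, the total
of the second-round message size plus the final signature size is
`|σ^DS| + (|σ^DS| + |c| + |r| + (k+1)λ + k)` bits, which is `O(log n)` in `n`,
whereas in OS_ZLH it is `n·|σ^DS| + (|σ^DS| + |c| + |r|)`, which is `Θ(n)`. -/
theorem stmt_13 (sDS c r lam : ℕ) (hs : 0 < sDS) (hl : 0 < lam) :
    (∀ k : ℕ, 0 < k → oursTotal sDS c r lam (2 ^ k) =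
      sDS + (sDS + c + r + (k + 1) * lam + k)) ∧
    ((fun n : ℕ => (oursTotal sDS c r lam n : ℝ)) =O[atTop]
      fun n : ℕ => Real.log n) ∧
    ((fun n : ℕ => (zlhTotal sDS c r n : ℝ)) =Θ[atTop] fun n : ℕ => (n : ℝ)) :=
  stmt_13_general sDS c r lam hs
end
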